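/- Every local π-base at the identity of H(ω*) has cardinality at least 𝔠; that is, if 𝓥 is a family of nonempty open subsets of H(ω*) such that every neighborhood of the identity contains a member of 𝓥, then |𝓥| ≥ 𝔠. In particular, every local base at the identity of H(ω*) has cardinality at least 𝔠, and since H(ω*) has a base of cardinality at most 𝔠, the character and π-character of H(ω*) at the identity both equal 𝔠. -/

import Mathlib

open Set Topology TopologicalSpace

/-- The compact-open topology on the group of self-homeomorphisms of a space:
the topology induced from the compact-open topology on `C(X, X)`. -/
instance homeomorphCompactOpen (X : Type*) [TopologicalSpace X] :
    TopologicalSpace (X ≃ₜ X) :=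
  TopologicalSpace.induced (fun h : X ≃ₜ X => (h : C(X, X))) ContinuousMap.compactOpen

/-- The group of self-homeomorphisms of a space, under composition. -/
instance homeomorphGroup (X : Type*) [TopologicalSpace X] : Group (X ≃ₜ X) where
  mul f g := g.trans f
  one := Homeomorph.refl X
  inv := Homeomorph.symm
  mul_assoc _ _ _ := Homeomorph.ext fun _ => rfl
  one_mul _ := Homeomorph.ext fun _ => rfl
  mul_one _ := Homeomorph.ext fun _ => rfl
  inv_mul_cancel f := Homeomorph.ext fun x => f.symm_apply_apply x

/-- The weight of a topological space: the least cardinality of a base of its topology. -/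
noncomputable def TopologicalSpace.weight (X : Type u) [TopologicalSpace X] : Cardinal.{u} :=
  ⨅ B : {B : Set (Set X) // TopologicalSpace.IsTopologicalBasis B}, Cardinal.mk B.1

/-- A set is an Fσ-set if it is a countable union of closed sets. -/
def IsFsigma {X : Type*} [TopologicalSpace X] (s : Set X) : Prop :=
  ∃ F : ℕ → Set X, (∀ n, IsClosed (F n)) ∧ s = ⋃ n, F n

/-- An F-space (for normal spaces): disjoint open Fσ-sets have disjoint closures. -/
def IsFSpace (X : Type*) [TopologicalSpace X] : Prop :=
  ∀ U V : Set X, IsOpen U → IsOpen V → IsFsigma U → IsFsigma V → Disjoint U V →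
    Disjoint (closure U) (closure V)

/-- A Parovičenko space: a compact zero-dimensional F-space of weight `𝔠` in which
every nonempty Gδ-set has infinite interior. -/
structure IsParovicenko (X : Type u) [TopologicalSpace X] : Prop where
  compact : CompactSpace X
  t2 : T2Space X
  zeroDim : TopologicalSpace.IsTopologicalBasis {s : Set X | IsClopen s}
  fSpace : IsFSpace X
  weight_eq : TopologicalSpace.weight X = Cardinal.continuum
  gdelta_int : ∀ s : Set X, IsGδ s → s.Nonempty → (interior s).Infinite

/-- The Gδ-modification of a topology: the topology generated by the Gδ-sets. -/
def gdeltaMod {X : Type*} (t : TopologicalSpace X) : TopologicalSpace X :=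
  TopologicalSpace.generateFrom {s : Set X | @IsGδ X t s}

/-- The Čech–Stone remainder `βα \ α` of a space `α`. -/
abbrev CechStoneRemainder (α : Type u) [TopologicalSpace α] : Type u :=
  {p : StoneCech α // p ∉ Set.range (stoneCechUnit : α → StoneCech α)}

/-- `ω* = βω \ ω`, the Čech–Stone remainder of the countable discrete space `ω`. -/
abbrev OmegaStar : Type := CechStoneRemainder ℕ

/-!
For `A ⊆ ℕ` the homeomorphisms `g` with `g[A*] = A*` form a neighbourhood of the identity.
An open set `V ∋ h` contains a basic set given by finitely many conditions `g[A*] ⊆ B*`, so it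
contains `σ* ∘ h` for every permutation `σ` of `ℕ` preserving the finite partition generated
by the `B`'s. If `V` stabilizes `A*`, then `A` cannot split a piece `E` of that partition into
two infinite parts: a `σ` swapping `E ∩ A` with `E \ A` would give `σ*[A*] = A*` and
`σ*[(E ∩ A)*] ⊆ (ℕ \ A)*` at once. Hence `V` stabilizes `A*` for only finitely many members
`A` of an almost disjoint family, and an almost disjoint family of size `𝔠` forces every
local π-base at the identity to have size at least `𝔠`. The basic sets themselves are indexed
by finite sets of pairs `(A, B)`, so there are only `𝔠` of them.
-/

open Filter Cardinal

namespace Ultrafilter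

variable {α β : Type*}

theorem isOpen_range_pure : IsOpen (range (pure : α → Ultrafilter α)) := by
  have : range (pure : α → Ultrafilter α) = ⋃ a, {u | {a} ∈ u} := by
    ext u
    simp only [mem_range, mem_iUnion, mem_ofPred_eq]
    refine ⟨fun ⟨a, ha⟩ => ⟨a, ha ▸ mem_pure.2 rfl⟩, fun ⟨a, ha⟩ => ?_⟩
    obtain ⟨b, rfl, rfl⟩ := eq_pure_of_finite_mem (finite_singleton a) ha
    exact ⟨b, rfl⟩
  rw [this]
  exact isOpen_iUnion fun a => ultrafilter_isOpen_basic _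

theorem exists_mem_notMem_range_pure {s : Set α} (hs : s.Infinite) :
    ∃ u : Ultrafilter α, s ∈ u ∧ u ∉ range pure := by
  have := hs.cofinite_inf_principal_neBot
  refine ⟨.of (cofinite ⊓ 𝓟 s), of_le _ (mem_inf_of_right (mem_principal_self s)), ?_⟩
  rintro ⟨a, ha⟩
  have : {a}ᶜ ∈ Ultrafilter.of (cofinite ⊓ 𝓟 s) :=
    of_le _ (mem_inf_of_left (finite_singleton a).compl_mem_cofinite)
  rw [← ha] at this
  exact this rfl

theorem continuous_map (f : α → β) : Continuous (Ultrafilter.map f) := by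
  refine ultrafilterBasis_is_basis.continuous_iff.2 ?_
  rintro _ ⟨s, rfl⟩
  exact ultrafilter_isOpen_basic (f ⁻¹' s)

@[simps]
def mapHomeomorph (σ : α ≃ β) : Ultrafilter α ≃ₜ Ultrafilter β where
  toFun := Ultrafilter.map σ
  invFun := Ultrafilter.map σ.symm
  left_inv u := by simp [map_map]
  right_inv u := by simp [map_map]
  continuous_toFun := continuous_map _
  continuous_invFun := continuous_map _

theorem map_mem_range_pure_iff (σ : α ≃ β) {u : Ultrafilter α} :
    u.map σ ∈ range pure ↔ u ∈ range pure := by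
  refine ⟨fun ⟨b, hb⟩ => ⟨σ.symm b, ?_⟩, fun ⟨a, ha⟩ => ⟨σ a, by simp [← ha]⟩⟩
  rw [← (mapHomeomorph σ).symm_apply_apply u]
  simp [← hb]

end Ultrafilter

namespace StoneCech

variable {α : Type*} [TopologicalSpace α] [DiscreteTopology α]

noncomputable def homeomorphUltrafilter : StoneCech α ≃ₜ Ultrafilter α where
  toFun := stoneCechExtend (continuous_of_discreteTopology (f := (pure : α → Ultrafilter α)))
  invFun := Ultrafilter.extend stoneCechUnit
  left_inv := congrFun <| stoneCech_hom_ext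
    ((continuous_ultrafilter_extend _).comp (continuous_stoneCechExtend _)) continuous_id <| by
      ext a; simp [ultrafilter_extend_pure]
  right_inv := congrFun <| denseRange_pure.equalizer
    ((continuous_stoneCechExtend _).comp (continuous_ultrafilter_extend _)) continuous_id <| by
      ext a : 1; simp [ultrafilter_extend_pure]
  continuous_toFun := continuous_stoneCechExtend _
  continuous_invFun := continuous_ultrafilter_extend _

@[simp]
theorem homeomorphUltrafilter_stoneCechUnit (a : α) :
    homeomorphUltrafilter (stoneCechUnit a) = pure a :=
  stoneCechExtend_stoneCechUnit continuous_of_discreteTopology a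

theorem preimage_homeomorphUltrafilter_range_pure :
    homeomorphUltrafilter ⁻¹' range pure = range (stoneCechUnit : α → StoneCech α) := by
  rw [← homeomorphUltrafilter.image_symm, ← range_comp]
  congr 1
  ext a
  simp [Homeomorph.symm_apply_eq]

theorem isOpen_range_stoneCechUnit : IsOpen (range (stoneCechUnit : α → StoneCech α)) :=
  preimage_homeomorphUltrafilter_range_pure (α := α) ▸
    Ultrafilter.isOpen_range_pure.preimage homeomorphUltrafilter.continuous

end StoneCech

namespace Homeomorph

variable {X : Type*} [TopologicalSpace X]

theorem coe_mul (f g : X ≃ₜ X) : ⇑(f * g) = f ∘ g :=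
  rfl

theorem isOpen_setOf_mapsTo {K U : Set X} (hK : IsCompact K) (hU : IsOpen U) :
    IsOpen {g : X ≃ₜ X | MapsTo g K U} :=
  (ContinuousMap.isOpen_setOfPred_mapsTo hK hU).preimage continuous_induced_dom

theorem exists_finite_mapsTo_subset_of_mem_nhds {h : X ≃ₜ X} {N : Set (X ≃ₜ X)}
    (hN : N ∈ 𝓝 h) :
    ∃ S : Set (Set X × Set X), S.Finite ∧
      (∀ K U, (K, U) ∈ S → IsCompact K ∧ IsOpen U ∧ MapsTo h K U) ∧
      {g : X ≃ₜ X | ∀ K U, (K, U) ∈ S → MapsTo g K U} ⊆ N := by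
  rw [nhds_induced (fun g : X ≃ₜ X => (g : C(X, X))), mem_comap] at hN
  obtain ⟨M, hM, hMN⟩ := hN
  obtain ⟨S, hS, hSh, hSM⟩ := ContinuousMap.mem_nhds_iff.1 hM
  exact ⟨S, hS, hSh, fun g hg => hMN (hSM hg)⟩

def setStabilizer (C : Set X) : Set (X ≃ₜ X) :=
  {g | g '' C = C}

theorem image_eq_self_iff (g : X ≃ₜ X) {C : Set X} :
    g '' C = C ↔ MapsTo g C C ∧ MapsTo g Cᶜ Cᶜ := by
  rw [mapsTo_iff_image_subset, mapsTo_iff_image_subset, g.image_compl, compl_subset_compl,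
    subset_antisymm_iff]

theorem isOpen_setStabilizer [CompactSpace X] {C : Set X} (hC : IsClopen C) :
    IsOpen (setStabilizer C) := by
  simp only [setStabilizer, image_eq_self_iff, ofPred_and]
  exact (isOpen_setOf_mapsTo hC.isClosed.isCompact hC.isOpen).inter
    (isOpen_setOf_mapsTo hC.compl.isClosed.isCompact hC.compl.isOpen)

theorem setStabilizer_mem_nhds_one [CompactSpace X] {C : Set X} (hC : IsClopen C) :
    setStabilizer C ∈ 𝓝 (1 : X ≃ₜ X) :=
  (isOpen_setStabilizer hC).mem_nhds (image_id C)

end Homeomorph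

theorem Equiv.Perm.exists_mapsTo_swap {α : Type*} [Countable α] {P Q : Set α}
    (hP : P.Infinite) (hQ : Q.Infinite) (hPQ : _root_.Disjoint P Q) :
    ∃ σ : Equiv.Perm α, MapsTo σ P Q ∧ MapsTo σ Q P ∧ ∀ x ∉ P ∪ Q, σ x = x := by
  classical
  have := hP.to_subtype
  have := hQ.to_subtype
  obtain ⟨e⟩ : Nonempty (P ≃ Q) := nonempty_equiv_of_countable
  let τ : Equiv.Perm ↥(P ∪ Q) := (Equiv.Set.union hPQ).trans
    (((e.sumCongr e.symm).trans (Equiv.sumComm _ _)).trans (Equiv.Set.union hPQ).symm)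
  refine ⟨Equiv.Perm.ofSubtype τ, fun x hx => ?_, fun x hx => ?_,
    fun x hx => Equiv.Perm.ofSubtype_apply_of_not_mem τ hx⟩
  · rw [Equiv.Perm.ofSubtype_apply_of_mem τ (Or.inl hx)]
    simp [τ, Equiv.Set.union_apply_left hPQ (a := ⟨x, Or.inl hx⟩) hx]
  · rw [Equiv.Perm.ofSubtype_apply_of_mem τ (Or.inr hx)]
    simp [τ, Equiv.Set.union_apply_right hPQ (a := ⟨x, Or.inr hx⟩) hx]

/-- `A` splits `E` into two infinite pieces. -/
def Set.Splits {α : Type*} (A E : Set α) : Prop :=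
  (E ∩ A).Infinite ∧ (E \ A).Infinite

theorem Set.finite_of_pairwise_finite_inter_of_not_splits {ι α β : Type*} {c : α → β}
    (hc : (range c).Finite) {A : ι → Set α} (hA : ∀ i, (A i).Infinite)
    (hAA : Pairwise fun i j => (A i ∩ A j).Finite) {S : Set ι}
    (hS : ∀ i ∈ S, ∀ b, ¬(A i).Splits (c ⁻¹' {b})) : S.Finite := by
  have hex : ∀ i, ∃ b, (c ⁻¹' {b} ∩ A i).Infinite := fun i => by
    by_contra! hfin
    exact hA i ((hc.biUnion fun b _ => hfin b).subset fun a ha =>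
      mem_biUnion (mem_range_self a) ⟨rfl, ha⟩)
  choose b hb using hex
  have hcofin : ∀ i ∈ S, (c ⁻¹' {b i} \ A i).Finite := fun i hi =>
    Set.not_infinite.1 fun h => hS i hi (b i) ⟨hb i, h⟩
  refine hc.of_injOn (f := b) (fun i _ => ?_) fun i hi j hj hij => ?_
  · obtain ⟨a, ha⟩ := (hb i).nonempty
    exact ⟨a, ha.1⟩
  · by_contra hne
    refine hb i (((hAA hne).union (hcofin j hj)).subset fun a ha => ?_)
    by_cases haj : a ∈ A j
    · exact Or.inl ⟨ha.2, haj⟩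
    · exact Or.inr ⟨hij ▸ ha.1, haj⟩

theorem Cardinal.mk_le_of_countable_fibers {α β : Type u} (f : α → β)
    (hf : ∀ b, (f ⁻¹' {b}).Countable) (hα : ℵ₀ < #α) : #α ≤ #β := by
  have h := (mk_le_mk_mul_of_mk_preimage_le f fun b => (hf b).le_aleph0).trans (mul_le_max _ _)
  rw [max_assoc, max_self, le_max_iff] at h
  exact h.resolve_right hα.not_ge

/-- The nodes of the binary tree `List Bool` along the branch `x`, coded in `ℕ`. -/
def branch (x : ℕ → Bool) : Set ℕ :=
  range fun n => Encodable.encode ((List.range n).map x)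

theorem branch_infinite (x : ℕ → Bool) : (branch x).Infinite :=
  infinite_range_of_injective fun n m h => by
    simpa using congrArg List.length (Encodable.encode_injective h)

theorem pairwise_finite_inter_branch : Pairwise fun x y => (branch x ∩ branch y).Finite := by
  intro x y hxy
  obtain ⟨N, hN⟩ := Function.ne_iff.1 hxy
  refine ((finite_Iic N).image fun n => Encodable.encode ((List.range n).map x)).subset ?_
  rintro _ ⟨⟨n, rfl⟩, ⟨m, hm⟩⟩
  have h := Encodable.encode_injective hm
  obtain rfl : m = n := by simpa using congrArg List.length h
  refine ⟨m, mem_Iic.2 <| not_lt.1 fun hNm => hN ?_, rfl⟩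
  exact List.map_inj_left.1 h.symm N (List.mem_range.2 hNm)

namespace CechStoneRemainder

open StoneCech Homeomorph

section Clopen

variable {α β : Type*} [TopologicalSpace α] [DiscreteTopology α]
  [TopologicalSpace β] [DiscreteTopology β]

instance : CompactSpace (CechStoneRemainder α) :=
  isCompact_iff_compactSpace.1 isOpen_range_stoneCechUnit.isClosed_compl.isCompact

/-- The trace `A*` on the remainder of the closure of `A` in `βα`. -/
def star (A : Set α) : Set (CechStoneRemainder α) :=
  {x | A ∈ homeomorphUltrafilter x.1}

theorem isClopen_star (A : Set α) : IsClopen (star A) :=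
  have hc : Continuous fun x : CechStoneRemainder α => homeomorphUltrafilter x.1 :=
    homeomorphUltrafilter.continuous.comp continuous_subtype_val
  ⟨(ultrafilter_isClosed_basic A).preimage hc, (ultrafilter_isOpen_basic A).preimage hc⟩

theorem star_compl (A : Set α) : star Aᶜ = (star A)ᶜ :=
  ext fun _ => Ultrafilter.compl_mem_iff_notMem

theorem star_mono {A B : Set α} (h : A ⊆ B) : star A ⊆ star B :=
  fun _ hx => mem_of_superset hx h

theorem star_nonempty {A : Set α} (hA : A.Infinite) : (star A).Nonempty := by
  obtain ⟨u, hAu, hu⟩ := Ultrafilter.exists_mem_notMem_range_pure hA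
  refine ⟨⟨homeomorphUltrafilter.symm u, ?_⟩, by simpa [star] using hAu⟩
  rwa [← preimage_homeomorphUltrafilter_range_pure, mem_preimage,
    Homeomorph.apply_symm_apply]

theorem isTopologicalBasis_star : IsTopologicalBasis (range (star : Set α → _)) := by
  have hf : IsInducing fun x : CechStoneRemainder α => homeomorphUltrafilter x.1 :=
    homeomorphUltrafilter.isInducing.comp IsInducing.subtypeVal
  convert ultrafilterBasis_is_basis.isInducing hf
  rw [ultrafilterBasis, ← range_comp]
  rfl

theorem exists_star_between {K U : Set (CechStoneRemainder α)} (hK : IsCompact K)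
    (hU : IsOpen U) (hKU : K ⊆ U) : ∃ A : Set α, K ⊆ star A ∧ star A ⊆ U := by
  have hloc : ∀ x ∈ K, ∃ A : Set α, x ∈ star A ∧ star A ⊆ U := fun x hx => by
    obtain ⟨_, ⟨A, rfl⟩, hxA, hAU⟩ :=
      isTopologicalBasis_star.exists_subset_of_mem_open (hKU hx) hU
    exact ⟨A, hxA, hAU⟩
  choose! A hxA hAU using hloc
  obtain ⟨t, htK, hKt⟩ := hK.elim_nhds_subcover (fun x => star (A x))
    fun x hx => (isClopen_star _).isOpen.mem_nhds (hxA x hx)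
  have hstar : star (⋃ x ∈ t, A x) = ⋃ x ∈ t, star (A x) := by
    ext y
    simpa [star] using Ultrafilter.finite_biUnion_mem_iff t.finite_toSet
  exact ⟨⋃ x ∈ t, A x, hstar ▸ hKt, hstar ▸ iUnion₂_subset fun x hx => hAU x (htK x hx)⟩

noncomputable def permHomeomorph (σ : α ≃ β) :
    CechStoneRemainder α ≃ₜ CechStoneRemainder β :=
  (homeomorphUltrafilter.trans
    ((Ultrafilter.mapHomeomorph σ).trans homeomorphUltrafilter.symm)).subtype fun x => by
    simp only [← preimage_homeomorphUltrafilter_range_pure, mem_preimage,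
      Homeomorph.trans_apply, Homeomorph.apply_symm_apply, Ultrafilter.mapHomeomorph_apply,
      Ultrafilter.map_mem_range_pure_iff]

theorem permHomeomorph_mem_star_iff (σ : α ≃ β) {x : CechStoneRemainder α} {B : Set β} :
    permHomeomorph σ x ∈ star B ↔ x ∈ star (σ ⁻¹' B) := by
  simp [permHomeomorph, star, Homeomorph.subtype]

end Clopen

section HomeomorphGroup

variable {α β : Type*} [TopologicalSpace α] [DiscreteTopology α]

def starMapsTo (F : Finset (Set α × Set α)) :
    Set (CechStoneRemainder α ≃ₜ CechStoneRemainder α) :=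
  {g | ∀ p ∈ F, MapsTo g (star p.1) (star p.2)}

theorem isOpen_starMapsTo (F : Finset (Set α × Set α)) : IsOpen (starMapsTo F) := by
  simp only [starMapsTo, ofPred_forall]
  exact isOpen_biInter_finset fun p _ =>
    isOpen_setOf_mapsTo (isClopen_star _).isClosed.isCompact (isClopen_star _).isOpen

theorem exists_star_mapsTo_star {h : CechStoneRemainder α ≃ₜ CechStoneRemainder α}
    {K U : Set (CechStoneRemainder α)} (hK : IsCompact K) (hU : IsOpen U) (hKU : MapsTo h K U) :
    ∃ A B : Set α, K ⊆ star A ∧ star B ⊆ U ∧ MapsTo h (star A) (star B) := by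
  obtain ⟨A, hKA, hAU⟩ := exists_star_between hK (hU.preimage h.continuous) hKU
  obtain ⟨B, hAB, hBU⟩ := exists_star_between
    ((isClopen_star A).isClosed.isCompact.image h.continuous) hU (image_subset_iff.2 hAU)
  exact ⟨A, B, hKA, hBU, mapsTo_iff_image_subset.2 hAB⟩

theorem isTopologicalBasis_starMapsTo :
    IsTopologicalBasis (range (starMapsTo (α := α))) := by
  classical
  refine isTopologicalBasis_of_isOpen_of_nhds (by rintro _ ⟨F, rfl⟩; exact isOpen_starMapsTo F)
    fun h N hhN hN => ?_
  obtain ⟨S, hS, hSh, hSN⟩ := exists_finite_mapsTo_subset_of_mem_nhds (hN.mem_nhds hhN)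
  choose! A B hKA hBU hAB using fun p (hp : p ∈ S) =>
    exists_star_mapsTo_star (hSh _ _ hp).1 (hSh _ _ hp).2.1 (hSh _ _ hp).2.2
  refine ⟨_, ⟨hS.toFinset.image fun p => (A p, B p), rfl⟩, ?_, fun g hg => hSN fun K U hKU => ?_⟩
  · simp only [starMapsTo, Finset.mem_image, Finite.mem_toFinset]
    rintro _ ⟨p, hp, rfl⟩
    exact hAB p hp
  · have hgAB := hg _ (Finset.mem_image_of_mem _ (hS.mem_toFinset.2 hKU))
    exact (hgAB.mono_left (hKA _ hKU)).mono_right (hBU _ hKU)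

theorem exists_coloring_forall_perm_mul_mem
    {V : Set (CechStoneRemainder α ≃ₜ CechStoneRemainder α)} (hV : IsOpen V)
    {h : CechStoneRemainder α ≃ₜ CechStoneRemainder α} (hh : h ∈ V) :
    ∃ c : α → Finset (Set α × Set α), (range c).Finite ∧
      ∀ σ : α ≃ α, c ∘ σ = c → permHomeomorph σ * h ∈ V := by
  classical
  obtain ⟨_, ⟨F, rfl⟩, hhF, hFV⟩ := isTopologicalBasis_starMapsTo.exists_subset_of_mem_open hh hV
  -- `c a` records which of the target sets `p.2` contain `a`; a permutation preserving `c`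
  -- fixes every `p.2` and hence every `star p.2`.
  refine ⟨fun a => F.filter (a ∈ ·.2), F.powerset.finite_toSet.subset ?_, fun σ hσ => hFV ?_⟩
  · exact range_subset_iff.2 fun a => Finset.mem_powerset.2 (Finset.filter_subset _ _)
  · intro p hp x hx
    have hσp : σ ⁻¹' p.2 = p.2 := ext fun a => by
      simpa [hp] using Finset.ext_iff.1 (congrFun hσ a) p
    exact (permHomeomorph_mem_star_iff σ).2 (hσp.symm ▸ hhF p hp hx)

variable [Countable α]

theorem not_splits_of_forall_perm_mul_mem
    {V : Set (CechStoneRemainder α ≃ₜ CechStoneRemainder α)}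
    {h : CechStoneRemainder α ≃ₜ CechStoneRemainder α} (hh : h ∈ V) {c : α → β}
    (hσ : ∀ σ : α ≃ α, c ∘ σ = c → permHomeomorph σ * h ∈ V) {A : Set α}
    (hVA : V ⊆ setStabilizer (star A)) (b : β) : ¬A.Splits (c ⁻¹' {b}) := by
  rintro ⟨hP, hQ⟩
  obtain ⟨σ, hPQ, hQP, hfix⟩ :=
    Equiv.Perm.exists_mapsTo_swap hP hQ (disjoint_left.2 fun a ha ha' => ha'.2 ha.2)
  have hcσ : c ∘ σ = c := funext fun a => by
    by_cases ha : a ∈ (c ⁻¹' {b} ∩ A) ∪ (c ⁻¹' {b} \ A)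
    · rcases ha with ha | ha
      · exact (hPQ ha).1.trans ha.1.symm
      · exact (hQP ha).1.trans ha.1.symm
    · exact congrArg c (hfix a ha)
  -- both `h` and `σ* * h` stabilize `A*`, hence so does `σ*`
  have hσA : permHomeomorph σ '' star A = star A := by
    have := hVA (hσ σ hcσ)
    rwa [setStabilizer, mem_ofPred_eq, coe_mul, image_comp, hVA hh] at this
  obtain ⟨x, hx⟩ := star_nonempty hP
  have hσx : permHomeomorph σ x ∈ star A :=
    hσA ▸ mem_image_of_mem _ (star_mono inter_subset_right hx)
  have hσx' : permHomeomorph σ x ∈ star Aᶜ :=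
    (permHomeomorph_mem_star_iff σ).2 (star_mono (fun a ha => (hPQ ha).2) hx)
  exact (star_compl A ▸ hσx') hσx

theorem finite_setOf_subset_setStabilizer
    {V : Set (CechStoneRemainder α ≃ₜ CechStoneRemainder α)} (hV : IsOpen V) (hne : V.Nonempty)
    {ι : Type*} {A : ι → Set α} (hA : ∀ i, (A i).Infinite)
    (hAA : Pairwise fun i j => (A i ∩ A j).Finite) :
    {i | V ⊆ setStabilizer (star (A i))}.Finite := by
  obtain ⟨h, hh⟩ := hne
  obtain ⟨c, hc, hσ⟩ := exists_coloring_forall_perm_mul_mem hV hh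
  exact Set.finite_of_pairwise_finite_inter_of_not_splits hc hA hAA fun i hi =>
    not_splits_of_forall_perm_mul_mem hh hσ hi

end HomeomorphGroup

end CechStoneRemainder

namespace OmegaStar

open CechStoneRemainder Homeomorph

theorem continuum_le_mk_of_forall_mem_nhds_one {𝓥 : Set (Set (OmegaStar ≃ₜ OmegaStar))}
    (h𝓥 : ∀ V ∈ 𝓥, V.Nonempty ∧ IsOpen V)
    (hπ : ∀ N ∈ 𝓝 (1 : OmegaStar ≃ₜ OmegaStar), ∃ V ∈ 𝓥, V ⊆ N) : 𝔠 ≤ #𝓥 := by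
  choose V hV𝓥 hVsub using fun x : ℕ → Bool =>
    hπ _ (setStabilizer_mem_nhds_one (isClopen_star (branch x)))
  have hfib : ∀ W : 𝓥, ((fun x => (⟨V x, hV𝓥 x⟩ : 𝓥)) ⁻¹' {W}).Countable := fun W =>
    ((finite_setOf_subset_setStabilizer (h𝓥 W W.2).2 (h𝓥 W W.2).1 branch_infinite
      pairwise_finite_inter_branch).subset fun x hx => by
        rw [mem_preimage, mem_singleton_iff, Subtype.ext_iff] at hx
        exact hx ▸ hVsub x).countable
  have hcard : #(ℕ → Bool) = 𝔠 := by simp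
  exact hcard ▸ mk_le_of_countable_fibers _ hfib (hcard ▸ aleph0_lt_continuum)

end OmegaStar

open CechStoneRemainder in
/-- Every local π-base at the identity of `H(ω*)` has cardinality at
least `𝔠`; moreover there is a local base at the identity consisting of open
neighborhoods of the identity of cardinality `𝔠` (so the character and π-character of
`H(ω*)` at the identity both equal `𝔠`). -/
theorem character_homeoOmegaStar :
    (∀ 𝓥 : Set (Set (OmegaStar ≃ₜ OmegaStar)),
      (∀ V ∈ 𝓥, V.Nonempty ∧ IsOpen V) →
      (∀ N ∈ nhds (1 : OmegaStar ≃ₜ OmegaStar), ∃ V ∈ 𝓥, V ⊆ N) →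
      Cardinal.continuum ≤ Cardinal.mk 𝓥) ∧
    ∃ 𝓑 : Set (Set (OmegaStar ≃ₜ OmegaStar)),
      Cardinal.mk 𝓑 = Cardinal.continuum ∧
      (∀ B ∈ 𝓑, IsOpen B ∧ (1 : OmegaStar ≃ₜ OmegaStar) ∈ B) ∧
      (∀ N ∈ nhds (1 : OmegaStar ≃ₜ OmegaStar), ∃ B ∈ 𝓑, B ⊆ N) := by
  have hbasis := isTopologicalBasis_starMapsTo (α := ℕ)
  set 𝓑 := {B ∈ range (starMapsTo (α := ℕ)) | 1 ∈ B}
  have h𝓑 : ∀ B ∈ 𝓑, IsOpen B ∧ (1 : OmegaStar ≃ₜ OmegaStar) ∈ B :=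
    fun B hB => ⟨hbasis.isOpen hB.1, hB.2⟩
  have hnhds : ∀ N ∈ 𝓝 (1 : OmegaStar ≃ₜ OmegaStar), ∃ B ∈ 𝓑, B ⊆ N := fun N hN => by
    obtain ⟨B, hB, h1B, hBN⟩ := hbasis.mem_nhds_iff.1 hN
    exact ⟨B, ⟨hB, h1B⟩, hBN⟩
  refine ⟨fun _ => OmegaStar.continuum_le_mk_of_forall_mem_nhds_one, 𝓑, le_antisymm ?_ ?_,
    h𝓑, hnhds⟩
  · calc #𝓑 ≤ #(range (starMapsTo (α := ℕ))) := mk_le_mk_of_subset (sep_subset _ _)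
      _ ≤ #(Finset (Set ℕ × Set ℕ)) := mk_range_le
      _ = 𝔠 := by simp [mk_finset_of_infinite]
  · exact OmegaStar.continuum_le_mk_of_forall_mem_nhds_one
      (fun B hB => ⟨⟨1, (h𝓑 B hB).2⟩, (h𝓑 B hB).1⟩) hnhds
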